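/- Let 0 < p < 1 < q satisfy p·φ(p) = q·φ(q), and let G(ω) = χ(ω ∈ (−q,−p) ∪ (p,q)). Then the Hermite coefficients C_j = ∫ G(ω)H_j(ω)φ(ω)dω satisfy C₁ = C₂ = C₃ = 0 and C₄ = 2(p³φ(p) − q³φ(q)) < 0; hence G − E G has Hermite rank 4. -/

import Mathlib

/-!
Every Hermite function is a derivative: `H (n+1) φ = -(H n φ)'`, because
`H (n+1) = x H n - H n'` and `φ' = -x φ`. Hence `C_j` is read off the boundary values of
`H (j-1) φ` at `±p, ±q`. For odd `j` the function `H (j-1) φ` is even and the four terms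
cancel; for even `j` it is odd and `C_j = 2 (H (j-1)(p) φ(p) - H (j-1)(q) φ(q))`, which
vanishes for `j = 2` and reduces to `2 (p³φ(p) - q³φ(q))` for `j = 4` by `p φ(p) = q φ(q)`.
-/

open MeasureTheory

noncomputable def gaussPDF (x : ℝ) : ℝ :=
  (Real.sqrt (2 * Real.pi))⁻¹ * Real.exp (-x ^ 2 / 2)

open Set

lemma gaussPDF_pos (x : ℝ) : 0 < gaussPDF x := by
  unfold gaussPDF
  positivity

lemma gaussPDF_neg (x : ℝ) : gaussPDF (-x) = gaussPDF x := by
  simp [gaussPDF]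

lemma continuous_gaussPDF : Continuous gaussPDF := by
  unfold gaussPDF
  fun_prop

lemma hasDerivAt_gaussPDF (x : ℝ) : HasDerivAt gaussPDF (-x * gaussPDF x) x := by
  have h : HasDerivAt (fun y : ℝ => -y ^ 2 / 2) (-x) x :=
    ((hasDerivAt_pow 2 x).neg.div_const 2).congr_deriv (by push_cast; ring)
  exact (h.exp.const_mul _).congr_deriv (by unfold gaussPDF; ring)

lemma HasDerivAt.neg_mul_gaussPDF {Q : ℝ → ℝ} {Q' x : ℝ} (hQ : HasDerivAt Q Q' x) :
    HasDerivAt (fun y => -Q y * gaussPDF y) ((x * Q x - Q') * gaussPDF x) x :=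
  (hQ.neg.mul (hasDerivAt_gaussPDF x)).congr_deriv (by simp only [Pi.neg_apply]; ring)

lemma integral_Ioo_union_Ioo_eq {a b c d : ℝ} (hab : a ≤ b) (hbc : b ≤ c) (hcd : c ≤ d)
    {f F : ℝ → ℝ} (hf : Continuous f) (hF : ∀ x, HasDerivAt F (f x) x) :
    ∫ x in Ioo a b ∪ Ioo c d, f x = (F b - F a) + (F d - F c) := by
  have hdisj : Disjoint (Ioo a b) (Ioo c d) :=
    disjoint_left.2 fun x hx hx' => absurd (hx.2.trans_le (hbc.trans hx'.1.le)) (lt_irrefl x)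
  have hFTC : ∀ u v, u ≤ v → ∫ x in Ioo u v, f x = F v - F u := fun u v huv => by
    rw [← integral_Ioc_eq_integral_Ioo, ← intervalIntegral.integral_of_le huv,
      intervalIntegral.integral_eq_sub_of_hasDerivAt (fun x _ => hF x) (hf.intervalIntegrable u v)]
  rw [setIntegral_union hdisj measurableSet_Ioo (hf.integrableOn_Icc.mono_set Ioo_subset_Icc_self)
    (hf.integrableOn_Icc.mono_set Ioo_subset_Icc_self), hFTC a b hab, hFTC c d hcd]

lemma integral_ite_mul_eq_setIntegral (s : Set ℝ) [DecidablePred (· ∈ s)]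
    (hs : MeasurableSet s) (f : ℝ → ℝ) :
    ∫ x, (if x ∈ s then 1 else 0) * f x = ∫ x in s, f x := by
  rw [← integral_indicator hs]
  congr 1 with x
  by_cases hx : x ∈ s <;> simp [hx]

lemma integral_Ioo_union_Ioo_mul_gaussPDF {p q : ℝ} (hp : 0 ≤ p) (hpq : p ≤ q)
    {H Q Q' : ℝ → ℝ} (hH : Continuous H) (hQ : ∀ x, HasDerivAt Q (Q' x) x)
    (hHQ : ∀ x, H x = x * Q x - Q' x) :
    ∫ x in Ioo (-q) (-p) ∪ Ioo p q, H x * gaussPDF x =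
      (Q p - Q (-p)) * gaussPDF p - (Q q - Q (-q)) * gaussPDF q := by
  have hF : ∀ x, HasDerivAt (fun y => -Q y * gaussPDF y) (H x * gaussPDF x) x := fun x => by
    simpa only [hHQ] using (hQ x).neg_mul_gaussPDF
  rw [integral_Ioo_union_Ioo_eq (f := fun x => H x * gaussPDF x) (neg_le_neg hpq) (by linarith)
    hpq (hH.mul continuous_gaussPDF) hF, gaussPDF_neg, gaussPDF_neg]
  ring

lemma pow_three_mul_gaussPDF_lt {p q : ℝ} (hp : 0 < p) (hpq : p < q)
    (hφ : p * gaussPDF p = q * gaussPDF q) : p ^ 3 * gaussPDF p < q ^ 3 * gaussPDF q := by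
  have hc : 0 < q * gaussPDF q := mul_pos (hp.trans hpq) (gaussPDF_pos q)
  calc p ^ 3 * gaussPDF p = p ^ 2 * (q * gaussPDF q) := by rw [← hφ]; ring
    _ < q ^ 2 * (q * gaussPDF q) := by gcongr
    _ = q ^ 3 * gaussPDF q := by ring

theorem hermite_rank_four_example (p q : ℝ) (hp : 0 < p) (hp1 : p < 1) (hq : 1 < q)
    (hpq : p * gaussPDF p = q * gaussPDF q)
    (G : ℝ → ℝ) (hG : ∀ w, G w = if (-q < w ∧ w < -p) ∨ (p < w ∧ w < q) then 1 else 0) :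
    (∫ w, G w * w * gaussPDF w) = 0 ∧
    (∫ w, G w * (w ^ 2 - 1) * gaussPDF w) = 0 ∧
    (∫ w, G w * (w ^ 3 - 3 * w) * gaussPDF w) = 0 ∧
    (∫ w, G w * (w ^ 4 - 6 * w ^ 2 + 3) * gaussPDF w) =
      2 * (p ^ 3 * gaussPDF p - q ^ 3 * gaussPDF q) ∧
    2 * (p ^ 3 * gaussPDF p - q ^ 3 * gaussPDF q) < 0 := by
  have hlt : p < q := by linarith
  have hG' : ∀ w, G w = if w ∈ Ioo (-q) (-p) ∪ Ioo p q then 1 else 0 := by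
    simpa only [mem_union, mem_Ioo] using hG
  have hC : ∀ H : ℝ → ℝ,
      ∫ w, G w * H w * gaussPDF w = ∫ w in Ioo (-q) (-p) ∪ Ioo p q, H w * gaussPDF w := by
    intro H
    simp_rw [hG', mul_assoc]
    exact integral_ite_mul_eq_setIntegral _ (measurableSet_Ioo.union measurableSet_Ioo) _
  have hC1 := integral_Ioo_union_Ioo_mul_gaussPDF hp.le hlt.le (H := fun w => w)
    (Q := fun _ => 1) (Q' := fun _ => 0)
    (by fun_prop) (fun x => hasDerivAt_const x 1) (fun x => by ring)
  have hC2 := integral_Ioo_union_Ioo_mul_gaussPDF hp.le hlt.le (H := fun w => w ^ 2 - 1)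
    (Q := fun w => w) (Q' := fun _ => 1)
    (by fun_prop) (fun x => hasDerivAt_id' x) (fun x => by ring)
  have hC3 := integral_Ioo_union_Ioo_mul_gaussPDF hp.le hlt.le (H := fun w => w ^ 3 - 3 * w)
    (Q := fun w => w ^ 2 - 1) (Q' := fun w => 2 * w)
    (by fun_prop) (fun x => ((hasDerivAt_pow 2 x).sub_const 1).congr_deriv (by push_cast; ring))
    (fun x => by ring)
  have hC4 := integral_Ioo_union_Ioo_mul_gaussPDF hp.le hlt.le
    (H := fun w => w ^ 4 - 6 * w ^ 2 + 3) (Q := fun w => w ^ 3 - 3 * w)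
    (Q' := fun w => 3 * w ^ 2 - 3)
    (by fun_prop) (fun x => ((hasDerivAt_pow 3 x).sub ((hasDerivAt_id' x).const_mul 3)).congr_deriv
      (by push_cast; ring))
    (fun x => by ring)
  refine ⟨?_, ?_, ?_, ?_, by linarith [pow_three_mul_gaussPDF_lt hp hlt hpq]⟩
  · rw [hC, hC1]; ring
  · rw [hC, hC2]; linear_combination 2 * hpq
  · rw [hC, hC3]; ring
  · rw [hC, hC4]; linear_combination -6 * hpq
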